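/- arXiv:2210.08370 — 3 statements merged into one kernel-verified Lean document; each statement's English description precedes it below -/
import Mathlib

section
/- Suppose k > t ≥ 1 and a ≤ n are positive integers. Let H have the minimum number of edges among all (n,k,t)-graphs with independence number at most a. If α(H) < a, then H is not an (n, k-1, t)-graph, i.e., some set of k-1 vertices of H contains no clique on t vertices. -/
open SimpleGraph

/-
Suppose `H` were an `(n,k-1,t)`-graph. Take a vertex `u` with a neighbour (one exists, since an
edgeless `H` would have `α(H) = n ≥ a`) and delete all edges at `u`. Every `k`-set `s` still
contains a `t`-clique: some `(k-1)`-subset of `s` avoids `u`, and a `t`-clique of `H` inside it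
survives. The independence number grows by at most one, because an independent set minus `u` is
independent in `H`, so it stays `≤ a`. The new graph has fewer edges, contradicting the
minimality of `H`.
-/

/-- `G` is a graph in which every set of `k` vertices contains a clique on `t` vertices. -/
def CliqueInEveryK {V : Type*} [DecidableEq V] (G : SimpleGraph V) (k t : ℕ) : Prop :=
  ∀ s : Finset V, s.card = k → ∃ c ⊆ s, G.IsNClique t c

/-- The independence number of `G`. -/
noncomputable def indepNum {V : Type*} (G : SimpleGraph V) : ℕ := Gᶜ.cliqueNum

/-- The number of edges of `G`. -/
noncomputable def edgeCount {V : Type*} (G : SimpleGraph V) : ℕ := Nat.card G.edgeSet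

namespace SimpleGraph

variable {V : Type*} {G : SimpleGraph V} {u : V}

theorem IsClique.deleteIncidenceSet {s : Set V} (hs : G.IsClique s) (hu : u ∉ s) :
    (G.deleteIncidenceSet u).IsClique s := fun _ hx _ hy hxy =>
  deleteIncidenceSet_adj.2 ⟨hs hx hy hxy, ne_of_mem_of_not_mem hx hu, ne_of_mem_of_not_mem hy hu⟩

theorem IsNClique.deleteIncidenceSet {t : ℕ} {s : Finset V} (hs : G.IsNClique t s) (hu : u ∉ s) :
    (G.deleteIncidenceSet u).IsNClique t s :=
  ⟨hs.isClique.deleteIncidenceSet (by exact_mod_cast hu), hs.card_eq⟩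

theorem indepNum_deleteIncidenceSet_le [Finite V] :
    (G.deleteIncidenceSet u).indepNum ≤ G.indepNum + 1 := by
  classical
  obtain ⟨s, hs⟩ := (G.deleteIncidenceSet u).exists_isNIndepSet_indepNum
  have hindep : G.IsIndepSet (s.erase u : Set V) := by
    intro x hx y hy hxy hadj
    simp only [Finset.coe_erase, Set.mem_sdiff, Set.mem_singleton_iff] at hx hy
    exact hs.isIndepSet hx.1 hy.1 hxy (deleteIncidenceSet_adj.2 ⟨hadj, hx.2, hy.2⟩)
  calc (G.deleteIncidenceSet u).indepNum = s.card := hs.card_eq.symm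
    _ ≤ (s.erase u).card + 1 := Nat.sub_le_iff_le_add.1 Finset.pred_card_le_card_erase
    _ ≤ G.indepNum + 1 := Nat.add_le_add_right hindep.card_le_indepNum 1

theorem exists_adj_of_indepNum_lt_card [Fintype V] (h : G.indepNum < Fintype.card V) :
    ∃ u v, G.Adj u v := by
  by_contra! hG
  have hindep : G.IsIndepSet ((Finset.univ : Finset V) : Set V) :=
    fun x _ y _ _ => hG x y
  simpa using h.trans_le hindep.card_le_indepNum

end SimpleGraph

theorem indepNum_eq_simpleGraph_indepNum {V : Type*} (G : SimpleGraph V) :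
    _root_.indepNum G = G.indepNum :=
  cliqueNum_compl

theorem edgeCount_deleteIncidenceSet_lt {V : Type*} [Finite V] {G : SimpleGraph V} {u v : V}
    (huv : G.Adj u v) : edgeCount (G.deleteIncidenceSet u) < edgeCount G := by
  have hsub : (G.deleteIncidenceSet u).edgeSet ⊂ G.edgeSet := by
    rw [edgeSet_deleteIncidenceSet]
    exact Set.sdiff_ssubset_left_iff.2 ⟨s(u, v), huv, huv, Sym2.mem_mk_left u v⟩
  simpa only [edgeCount, Nat.card_coe_set_eq] using Set.ncard_lt_ncard hsub

theorem CliqueInEveryK.deleteIncidenceSet {V : Type*} [DecidableEq V] {G : SimpleGraph V}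
    {k t : ℕ} (hG : CliqueInEveryK G (k - 1) t) (u : V) :
    CliqueInEveryK (G.deleteIncidenceSet u) k t := by
  intro s hs
  obtain ⟨r, hrs, hr⟩ := Finset.exists_subset_card_eq
    (show k - 1 ≤ (s.erase u).card by rw [← hs]; exact Finset.pred_card_le_card_erase)
  obtain ⟨c, hcr, hc⟩ := hG r hr
  have hcs : c ⊆ s.erase u := hcr.trans hrs
  exact ⟨c, hcs.trans (s.erase_subset u), hc.deleteIncidenceSet fun hu => by simpa using hcs hu⟩

theorem stmt_4_general {n k t a : ℕ} (han : a ≤ n)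
    (H : SimpleGraph (Fin n))
    (hmin : ∀ H' : SimpleGraph (Fin n),
      CliqueInEveryK H' k t → _root_.indepNum H' ≤ a → edgeCount H ≤ edgeCount H')
    (hlt : _root_.indepNum H < a) :
    ¬ CliqueInEveryK H (k - 1) t := by
  intro hK
  rw [indepNum_eq_simpleGraph_indepNum] at hlt
  obtain ⟨u, v, huv⟩ := exists_adj_of_indepNum_lt_card (G := H)
    (by simpa only [Fintype.card_fin] using hlt.trans_le han)
  have hindep : _root_.indepNum (H.deleteIncidenceSet u) ≤ a := by
    rw [indepNum_eq_simpleGraph_indepNum]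
    exact indepNum_deleteIncidenceSet_le.trans hlt
  exact (hmin _ (hK.deleteIncidenceSet u) hindep).not_gt (edgeCount_deleteIncidenceSet_lt huv)

/-- If `H` has the minimum number of edges among `(n,k,t)`-graphs with independence
number at most `a`, and `α(H) < a`, then `H` is not an `(n, k-1, t)`-graph. -/
theorem stmt_4 {n k t a : ℕ} (hkt : t < k) (ht : 1 ≤ t) (ha : 1 ≤ a) (han : a ≤ n)
    (H : SimpleGraph (Fin n)) (hH : CliqueInEveryK H k t) (hHa : _root_.indepNum H ≤ a)
    (hmin : ∀ H' : SimpleGraph (Fin n),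
      CliqueInEveryK H' k t → _root_.indepNum H' ≤ a → edgeCount H ≤ edgeCount H')
    (hlt : _root_.indepNum H < a) :
    ¬ CliqueInEveryK H (k - 1) t :=
  stmt_4_general han H hmin hlt
end

section
/- Let Γ be an (n,k,t)-graph that is a disjoint union of cliques, with A the union of components with fewer than t vertices and B the union of components with at least t vertices. Then k - 1 ≥ (t-1)·c(B) + |V(A)|, where c(B) is the number of components of B. -/
open SimpleGraph

/-- Every connected component of `G` is a complete graph. -/
def IsDisjointUnionOfCliques {V : Type*} (G : SimpleGraph V) : Prop :=
  ∀ u v : V, G.Reachable u v → u ≠ v → G.Adj u v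

/-- The number of components of `Γ` having at least `t` vertices (the components of `B`). -/
noncomputable def numBigComponents {V : Type*} (Γ : SimpleGraph V) (t : ℕ) : ℕ :=
  Nat.card {C : Γ.ConnectedComponent // t ≤ Nat.card C.supp}

/-- The number of vertices lying in components with fewer than `t` vertices (`|V(A)|`). -/
noncomputable def numSmallVertices {V : Type*} (Γ : SimpleGraph V) (t : ℕ) : ℕ :=
  Nat.card {v : V // Nat.card (Γ.connectedComponentMk v).supp < t}

/-!
Take all vertices of the components with fewer than `t` vertices and `t - 1` vertices of every
other component. This set `U` meets every component in at most `t - 1` vertices, and a clique lies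
inside a single component, so `U` contains no `t`-clique. Hence no `k`-subset of `U` exists, i.e.
`|U| = (t - 1) c(B) + |V(A)| < k`.
-/

open Finset

namespace SimpleGraph

variable {V : Type*} {G : SimpleGraph V}

theorem IsClique.connectedComponentMk_eq {s : Set V} (hs : G.IsClique s) {u v : V}
    (hu : u ∈ s) (hv : v ∈ s) : G.connectedComponentMk u = G.connectedComponentMk v := by
  obtain rfl | huv := eq_or_ne u v
  · rfl
  · exact ConnectedComponent.connectedComponentMk_eq_of_adj (hs hu hv huv)

theorem IsClique.card_le_of_forall_ncard_inter_supp_le {c U : Finset V} {m : ℕ}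
    (hc : G.IsClique (c : Set V)) (hcU : c ⊆ U)
    (hU : ∀ C : G.ConnectedComponent, ((U : Set V) ∩ C.supp).ncard ≤ m) : #c ≤ m := by
  obtain rfl | ⟨v, hv⟩ := c.eq_empty_or_nonempty
  · simp
  · rw [← Set.ncard_coe_finset]
    refine (Set.ncard_le_ncard (fun u hu => ?_) (U.finite_toSet.inter_of_left _)).trans
      (hU (G.connectedComponentMk v))
    exact ⟨hcU hu, hc.connectedComponentMk_eq hu hv⟩

section Fintype

variable [Fintype V] (G) (t : ℕ)

open Classical

noncomputable def bigComponents : Finset G.ConnectedComponent :=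
  {C | t ≤ Nat.card C.supp}

noncomputable def smallVertices : Finset V :=
  {v | Nat.card (G.connectedComponentMk v).supp < t}

variable {G t}

@[simp]
theorem mem_bigComponents {C : G.ConnectedComponent} :
    C ∈ G.bigComponents t ↔ t ≤ Nat.card C.supp := by
  simp [bigComponents]

@[simp]
theorem mem_smallVertices {v : V} :
    v ∈ G.smallVertices t ↔ Nat.card (G.connectedComponentMk v).supp < t := by
  simp [smallVertices]

theorem card_bigComponents : #(G.bigComponents t) = numBigComponents G t := by
  rw [numBigComponents, Nat.card_eq_fintype_card, Fintype.card_subtype, bigComponents]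

theorem card_smallVertices : #(G.smallVertices t) = numSmallVertices G t := by
  rw [numSmallVertices, Nat.card_eq_fintype_card, Fintype.card_subtype, smallVertices]

theorem exists_subset_supp_card_eq {C : G.ConnectedComponent} (hC : C ∈ G.bigComponents t) :
    ∃ s : Finset V, (∀ u ∈ s, G.connectedComponentMk u = C) ∧ #s = t - 1 := by
  obtain ⟨s, hs, hcard⟩ := exists_subset_card_eq (s := C.supp.toFinset) (n := t - 1) <| by
    rw [Set.toFinset_card, ← Nat.card_eq_fintype_card]
    exact (mem_bigComponents.1 hC).trans' (Nat.sub_le t 1)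
  exact ⟨s, fun u hu => by simpa using hs hu, hcard⟩

theorem card_smallVertices_union_biUnion {f : G.ConnectedComponent → Finset V}
    (hf : ∀ C ∈ G.bigComponents t, ∀ u ∈ f C, G.connectedComponentMk u = C)
    (hfcard : ∀ C ∈ G.bigComponents t, #(f C) = t - 1) :
    #(G.smallVertices t ∪ (G.bigComponents t).biUnion f) =
      (t - 1) * numBigComponents G t + numSmallVertices G t := by
  have hdisj : Disjoint (G.smallVertices t) ((G.bigComponents t).biUnion f) := by
    refine Finset.disjoint_right.2 fun u hu hus => ?_
    obtain ⟨C, hC, huC⟩ := mem_biUnion.1 hu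
    rw [mem_smallVertices, hf C hC u huC] at hus
    exact (mem_bigComponents.1 hC).not_gt hus
  have hpairwise : (G.bigComponents t : Set G.ConnectedComponent).PairwiseDisjoint f :=
    fun C hC D hD hCD => Finset.disjoint_left.2 fun u huC huD =>
      hCD <| (hf C hC u huC).symm.trans (hf D hD u huD)
  rw [card_union_of_disjoint hdisj, card_biUnion hpairwise, sum_congr rfl hfcard, sum_const,
    smul_eq_mul, card_bigComponents, card_smallVertices, add_comm, mul_comm]

theorem ncard_smallVertices_union_biUnion_inter_supp_le {f : G.ConnectedComponent → Finset V}
    (hf : ∀ C ∈ G.bigComponents t, ∀ u ∈ f C, G.connectedComponentMk u = C)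
    (hfcard : ∀ C ∈ G.bigComponents t, #(f C) = t - 1)
    (C : G.ConnectedComponent) :
    ((↑(G.smallVertices t ∪ (G.bigComponents t).biUnion f) : Set V) ∩ C.supp).ncard ≤
      t - 1 := by
  by_cases hC : C ∈ G.bigComponents t
  · calc _ ≤ (f C : Set V).ncard := Set.ncard_le_ncard ?_
      _ = t - 1 := by rw [Set.ncard_coe_finset, hfcard C hC]
    rintro u ⟨hu, huC : G.connectedComponentMk u = C⟩
    obtain hu | hu := mem_union.1 hu
    · rw [mem_smallVertices, huC] at hu
      exact absurd (mem_bigComponents.1 hC) hu.not_ge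
    · obtain ⟨D, hD, huD⟩ := mem_biUnion.1 hu
      rwa [← huC, hf D hD u huD]
  · calc _ ≤ C.supp.ncard := Set.ncard_le_ncard Set.inter_subset_right
      _ = Nat.card C.supp := (Nat.card_coe_set_eq _).symm
      _ ≤ t - 1 := by rw [mem_bigComponents] at hC; omega

variable (G t)

theorem exists_finset_card_eq_forall_ncard_inter_supp_le :
    ∃ U : Finset V, #U = (t - 1) * numBigComponents G t + numSmallVertices G t ∧
      ∀ C : G.ConnectedComponent, ((U : Set V) ∩ C.supp).ncard ≤ t - 1 := by
  choose! f hf hfcard using fun C (hC : C ∈ G.bigComponents t) => exists_subset_supp_card_eq hC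
  exact ⟨_, card_smallVertices_union_biUnion hf hfcard,
    ncard_smallVertices_union_biUnion_inter_supp_le hf hfcard⟩

end Fintype

end SimpleGraph

theorem stmt_6_general {V : Type*} [Fintype V] [DecidableEq V] {k t : ℕ} (ht : 1 ≤ t)
    (Γ : SimpleGraph V) (hΓkt : CliqueInEveryK Γ k t) :
    (t - 1) * numBigComponents Γ t + numSmallVertices Γ t ≤ k - 1 := by
  by_contra! hlt
  obtain ⟨U, hUcard, hU⟩ := Γ.exists_finset_card_eq_forall_ncard_inter_supp_le t
  obtain ⟨s, hsU, hsk⟩ := exists_subset_card_eq (show k ≤ #U by omega)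
  obtain ⟨c, hcs, hc⟩ := hΓkt s hsk
  have hct : #c ≤ t - 1 := hc.isClique.card_le_of_forall_ncard_inter_supp_le (hcs.trans hsU) hU
  rw [hc.card_eq] at hct
  omega

/-- If `Γ` is an `(n,k,t)`-graph that is a disjoint union of cliques, then
`k - 1 ≥ (t-1)·c(B) + |V(A)|`. -/
theorem stmt_6 {V : Type*} [Fintype V] [DecidableEq V] {n k t : ℕ}
    (hn : Fintype.card V = n) (hkn : k ≤ n) (htk : t ≤ k) (ht : 1 ≤ t)
    (Γ : SimpleGraph V) (hΓkt : CliqueInEveryK Γ k t) (hΓ : IsDisjointUnionOfCliques Γ) :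
    (t - 1) * numBigComponents Γ t + numSmallVertices Γ t ≤ k - 1 :=
  stmt_6_general ht Γ hΓkt
end

section
/- The graphs 3K₁ + K₃ + K₄ and K₁ + 3K₃ are both (10,8,3)-graphs with 9 edges, while 5K₁ + K₅ is a (10,8,3)-graph with 10 edges; in particular there exist two non-isomorphic minimum (10,8,3)-graphs that are disjoint unions of cliques. -/
open SimpleGraph

/-- `3K₁ + K₃ + K₄` on 10 vertices: blocks `{0}`, `{1}`, `{2}`, `{3,4,5}`, `{6,…,9}`. -/
def threeK1plusK3plusK4 : SimpleGraph (Fin 10) :=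
  SimpleGraph.fromRel (fun v w =>
    (if (v : ℕ) < 3 then (v : ℕ) else if (v : ℕ) < 6 then 3 else 4) =
    (if (w : ℕ) < 3 then (w : ℕ) else if (w : ℕ) < 6 then 3 else 4))

/-- `K₁ + 3K₃` on 10 vertices: blocks `{0}`, `{1,2,3}`, `{4,5,6}`, `{7,8,9}`. -/
def K1plus3K3 : SimpleGraph (Fin 10) :=
  SimpleGraph.fromRel (fun v w => ((v : ℕ) + 2) / 3 = ((w : ℕ) + 2) / 3)

/-- `5K₁ + K₅` on 10 vertices: blocks `{0}`, …, `{4}`, `{5,…,9}`. -/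
def fiveK1plusK5 : SimpleGraph (Fin 10) :=
  SimpleGraph.fromRel (fun v w =>
    (if (v : ℕ) < 5 then (v : ℕ) else 5) = (if (w : ℕ) < 5 then (w : ℕ) else 5))

/-!
If every two vertices miss a triangle but there are at most eight edges, take triangles `s₁, s₂`
meeting in at most one vertex: they use six edges and leave at most two. Any further triangle
avoiding `s₁ ∩ s₂` shares at most one edge with `s₁` and `s₂` together, so it consists of the two
leftover edges and one more, and there is at most one such triangle `t`. If `s₁ ∩ s₂ = {c}`, then
`c` and a vertex of `t` meet every triangle. If `s₁, s₂` are disjoint, `t` must meet one of them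
(three disjoint triangles have nine edges), and a common vertex together with a vertex of the other
one meets every triangle. Either way two vertices meet all triangles, a contradiction.

The two graphs with nine edges are told apart by `K₄`, which only `3K₁ + K₃ + K₄` contains.
-/

open Finset

namespace Finset

variable {V : Type*} [DecidableEq V]

def cliqueEdges (s : Finset V) : Finset (Sym2 V) := {e ∈ s.sym2 | ¬e.IsDiag}

@[simp]
lemma mk_mem_cliqueEdges {s : Finset V} {x y : V} :
    s(x, y) ∈ s.cliqueEdges ↔ x ∈ s ∧ y ∈ s ∧ x ≠ y := by
  simp [cliqueEdges, and_assoc]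

lemma card_cliqueEdges (s : Finset V) : #s.cliqueEdges = (#s).choose 2 := by
  rw [← Sym2.card_image_offDiag]
  congr 1
  ext e
  induction e using Sym2.ind with | _ x y
  simp only [mk_mem_cliqueEdges, mem_image, mem_offDiag, Prod.exists, Function.uncurry_apply_pair,
    Sym2.eq_iff]
  constructor
  · rintro ⟨hx, hy, hxy⟩
    exact ⟨x, y, ⟨hx, hy, hxy⟩, Or.inl ⟨rfl, rfl⟩⟩
  · rintro ⟨a, b, ⟨ha, hb, hab⟩, ⟨rfl, rfl⟩ | ⟨rfl, rfl⟩⟩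
    exacts [⟨ha, hb, hab⟩, ⟨hb, ha, hab.symm⟩]

lemma cliqueEdges_inter (s t : Finset V) :
    (s ∩ t).cliqueEdges = s.cliqueEdges ∩ t.cliqueEdges := by
  ext e
  induction e using Sym2.ind with | _ x y
  simp only [mk_mem_cliqueEdges, mem_inter]
  tauto

lemma disjoint_cliqueEdges {s t : Finset V} (h : Disjoint s t) :
    Disjoint s.cliqueEdges t.cliqueEdges := by
  rw [disjoint_iff_inter_eq_empty, ← cliqueEdges_inter, disjoint_iff_inter_eq_empty.1 h]
  rfl

lemma eq_of_three_le_card_inter {s t : Finset V} (hs : #s ≤ 3) (ht : #t ≤ 3)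
    (h : 3 ≤ #(s ∩ t)) : s = t :=
  (eq_of_subset_of_card_le inter_subset_left (by omega)).symm.trans
    (eq_of_subset_of_card_le inter_subset_right (by omega))

lemma eq_of_one_lt_card_inter_cliqueEdges {s t : Finset V} (hs : #s ≤ 3) (ht : #t ≤ 3)
    (h : 1 < #(s.cliqueEdges ∩ t.cliqueEdges)) : s = t := by
  rw [← cliqueEdges_inter, card_cliqueEdges] at h
  refine eq_of_three_le_card_inter hs ht (not_lt.1 fun h₃ => ?_)
  interval_cases #(s ∩ t) <;> simp at h

/-- A triangle `t` other than `s₁, s₂` shares at most one edge with each of them, and not edges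
with both: two edges of `t` meet in a vertex, which would lie in `s₁ ∩ s₂ ∩ t`. -/
lemma two_le_card_cliqueEdges_sdiff {s₁ s₂ t : Finset V} (h₁ : #s₁ = 3) (h₂ : #s₂ = 3)
    (ht : #t = 3) (ht₁ : t ≠ s₁) (ht₂ : t ≠ s₂) (hdisj : Disjoint (s₁ ∩ s₂) t) :
    2 ≤ #(t.cliqueEdges \ (s₁.cliqueEdges ∪ s₂.cliqueEdges)) := by
  have ha : #(t ∩ s₁) ≤ 2 :=
    not_lt.1 fun h => ht₁ (eq_of_three_le_card_inter ht.le h₁.le h)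
  have hb : #(t ∩ s₂) ≤ 2 :=
    not_lt.1 fun h => ht₂ (eq_of_three_le_card_inter ht.le h₂.le h)
  have hab : #(t ∩ s₁) + #(t ∩ s₂) ≤ 3 := by
    rw [← card_union_of_disjoint, ← ht]
    · exact card_le_card (union_subset inter_subset_left inter_subset_left)
    · refine disjoint_left.2 fun x hx₁ hx₂ => disjoint_left.1 hdisj ?_ (mem_inter.1 hx₁).1
      exact mem_inter.2 ⟨(mem_inter.1 hx₁).2, (mem_inter.1 hx₂).2⟩
  have hshared : #(t.cliqueEdges ∩ (s₁.cliqueEdges ∪ s₂.cliqueEdges)) ≤ 1 :=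
    calc #(t.cliqueEdges ∩ (s₁.cliqueEdges ∪ s₂.cliqueEdges))
        ≤ #(t.cliqueEdges ∩ s₁.cliqueEdges) + #(t.cliqueEdges ∩ s₂.cliqueEdges) := by
          rw [inter_union_distrib_left]; exact card_union_le _ _
      _ = (#(t ∩ s₁)).choose 2 + (#(t ∩ s₂)).choose 2 := by
          rw [← cliqueEdges_inter, ← cliqueEdges_inter, card_cliqueEdges, card_cliqueEdges]
      _ ≤ 1 := by interval_cases #(t ∩ s₁) <;> interval_cases #(t ∩ s₂) <;> simp_all
  have := card_sdiff_add_card_inter t.cliqueEdges (s₁.cliqueEdges ∪ s₂.cliqueEdges)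
  rw [card_cliqueEdges, ht, show (3 : ℕ).choose 2 = 3 from rfl] at this
  omega

end Finset

namespace SimpleGraph

variable {V : Type*} [DecidableEq V] {G : SimpleGraph V}

lemma exists_isNClique_three_card_inter_le_one [Nontrivial V]
    (hG : ∀ u v, u ≠ v → ∃ c, G.IsNClique 3 c ∧ u ∉ c ∧ v ∉ c) :
    ∃ s₁ s₂, G.IsNClique 3 s₁ ∧ G.IsNClique 3 s₂ ∧ #(s₁ ∩ s₂) ≤ 1 := by
  obtain ⟨u, v, huv⟩ := exists_pair_ne V
  obtain ⟨s₁, h₁, -, -⟩ := hG u v huv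
  obtain ⟨a, ha, b, hb, hab⟩ := one_lt_card.1 (h₁.card_eq ▸ by norm_num : 1 < #s₁)
  obtain ⟨s₂, h₂, has₂, hbs₂⟩ := hG a b hab
  refine ⟨s₁, s₂, h₁, h₂, ?_⟩
  have hsub : s₁ ∩ s₂ ⊆ (s₁.erase a).erase b := fun x hx => by
    rw [mem_inter] at hx
    exact mem_erase.2 ⟨fun h => hbs₂ (h ▸ hx.2),
      mem_erase.2 ⟨fun h => has₂ (h ▸ hx.2), hx.1⟩⟩
  have := card_le_card hsub
  rw [card_erase_of_mem (mem_erase.2 ⟨hab.symm, hb⟩), card_erase_of_mem ha, h₁.card_eq] at this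
  omega

variable [Fintype V] [DecidableRel G.Adj]

lemma IsClique.cliqueEdges_subset {s : Finset V} (h : G.IsClique s) :
    s.cliqueEdges ⊆ G.edgeFinset := by
  intro e
  induction e using Sym2.ind with | _ x y
  rw [mk_mem_cliqueEdges, mem_edgeFinset, mem_edgeSet]
  exact fun ⟨hx, hy, hxy⟩ => h hx hy hxy

lemma nine_le_card_edgeFinset_of_pairwise_disjoint {s₁ s₂ s₃ : Finset V}
    (h₁ : G.IsNClique 3 s₁) (h₂ : G.IsNClique 3 s₂) (h₃ : G.IsNClique 3 s₃)
    (h₁₂ : Disjoint s₁ s₂) (h₁₃ : Disjoint s₁ s₃) (h₂₃ : Disjoint s₂ s₃) :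
    9 ≤ #G.edgeFinset := by
  have hsub : s₁.cliqueEdges ∪ s₂.cliqueEdges ∪ s₃.cliqueEdges ⊆ G.edgeFinset :=
    union_subset (union_subset h₁.isClique.cliqueEdges_subset h₂.isClique.cliqueEdges_subset)
      h₃.isClique.cliqueEdges_subset
  refine (le_of_eq ?_).trans (card_le_card hsub)
  rw [card_union_of_disjoint (disjoint_union_left.2
      ⟨disjoint_cliqueEdges h₁₃, disjoint_cliqueEdges h₂₃⟩),
    card_union_of_disjoint (disjoint_cliqueEdges h₁₂), card_cliqueEdges, card_cliqueEdges,
    card_cliqueEdges, h₁.card_eq, h₂.card_eq, h₃.card_eq]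
  rfl

lemma card_edgeFinset_sdiff_cliqueEdges_le_two (hE : #G.edgeFinset ≤ 8) {s₁ s₂ : Finset V}
    (h₁ : G.IsNClique 3 s₁) (h₂ : G.IsNClique 3 s₂) (h₁₂ : #(s₁ ∩ s₂) ≤ 1) :
    #(G.edgeFinset \ (s₁.cliqueEdges ∪ s₂.cliqueEdges)) ≤ 2 := by
  have hsub : s₁.cliqueEdges ∪ s₂.cliqueEdges ⊆ G.edgeFinset :=
    union_subset h₁.isClique.cliqueEdges_subset h₂.isClique.cliqueEdges_subset
  have hunion := card_union_add_card_inter s₁.cliqueEdges s₂.cliqueEdges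
  rw [← cliqueEdges_inter, card_cliqueEdges (s₁ ∩ s₂), Nat.choose_eq_zero_of_lt (by omega),
    card_cliqueEdges, card_cliqueEdges, h₁.card_eq, h₂.card_eq] at hunion
  rw [show (3 : ℕ).choose 2 = 3 from rfl] at hunion
  rw [card_sdiff_of_subset hsub]
  omega

/-- With at most eight edges, the two edges left over by `s₁` and `s₂` must be two edges of
every further triangle avoiding `s₁ ∩ s₂`, so there is at most one such triangle. -/
lemma eq_of_isNClique_of_card_edgeFinset_le_eight (hE : #G.edgeFinset ≤ 8)
    {s₁ s₂ t t' : Finset V}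
    (h₁ : G.IsNClique 3 s₁) (h₂ : G.IsNClique 3 s₂) (h₁₂ : #(s₁ ∩ s₂) ≤ 1)
    (ht : G.IsNClique 3 t) (ht₁ : t ≠ s₁) (ht₂ : t ≠ s₂) (hdisj : Disjoint (s₁ ∩ s₂) t)
    (ht' : G.IsNClique 3 t') (ht'₁ : t' ≠ s₁) (ht'₂ : t' ≠ s₂) (hdisj' : Disjoint (s₁ ∩ s₂) t') :
    t = t' := by
  have hR := card_edgeFinset_sdiff_cliqueEdges_le_two hE h₁ h₂ h₁₂
  have hU := two_le_card_cliqueEdges_sdiff h₁.card_eq h₂.card_eq ht.card_eq ht₁ ht₂ hdisj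
  have hU' := two_le_card_cliqueEdges_sdiff h₁.card_eq h₂.card_eq ht'.card_eq ht'₁ ht'₂ hdisj'
  set U := s₁.cliqueEdges ∪ s₂.cliqueEdges
  have hsub : ∀ {r : Finset V}, G.IsNClique 3 r → r.cliqueEdges \ U ⊆ G.edgeFinset \ U :=
    fun hr => sdiff_subset_sdiff hr.isClique.cliqueEdges_subset subset_rfl
  have heq : t.cliqueEdges \ U = t'.cliqueEdges \ U :=
    (eq_of_subset_of_card_le (hsub ht) (by omega)).trans
      (eq_of_subset_of_card_le (hsub ht') (by omega)).symm
  refine eq_of_one_lt_card_inter_cliqueEdges ht.card_eq.le ht'.card_eq.le ?_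
  calc 1 < #(t.cliqueEdges \ U) := hU
    _ ≤ #(t.cliqueEdges ∩ t'.cliqueEdges) :=
      card_le_card (subset_inter sdiff_subset (heq ▸ sdiff_subset))

lemma nine_le_card_edgeFinset_of_inter_eq_singleton [Nontrivial V]
    (hG : ∀ u v, u ≠ v → ∃ c, G.IsNClique 3 c ∧ u ∉ c ∧ v ∉ c) {s₁ s₂ : Finset V}
    (h₁ : G.IsNClique 3 s₁) (h₂ : G.IsNClique 3 s₂) {c : V} (h₁₂ : s₁ ∩ s₂ = {c}) :
    9 ≤ #G.edgeFinset := by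
  by_contra! hE
  have hc : c ∈ s₁ ∩ s₂ := h₁₂ ▸ mem_singleton_self c
  have avoid : ∀ {t}, c ∉ t → t ≠ s₁ ∧ t ≠ s₂ ∧ Disjoint (s₁ ∩ s₂) t := fun hct =>
    ⟨fun h => hct (h ▸ (mem_inter.1 hc).1), fun h => hct (h ▸ (mem_inter.1 hc).2),
      h₁₂ ▸ disjoint_singleton_left.2 hct⟩
  obtain ⟨w, hw⟩ := exists_ne c
  obtain ⟨t, ht, hct, -⟩ := hG c w hw.symm
  obtain ⟨x, hx⟩ := card_pos.1 (by rw [ht.card_eq]; norm_num)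
  obtain ⟨t', ht', hct', hxt'⟩ := hG c x fun h => hct (h ▸ hx)
  obtain ⟨ht₁, ht₂, htd⟩ := avoid hct
  obtain ⟨ht'₁, ht'₂, ht'd⟩ := avoid hct'
  have := eq_of_isNClique_of_card_edgeFinset_le_eight (by omega) h₁ h₂
    (by rw [h₁₂, card_singleton]) ht ht₁ ht₂ htd ht' ht'₁ ht'₂ ht'd
  exact hxt' (this ▸ hx)

lemma nine_le_card_edgeFinset_of_disjoint [Nontrivial V]
    (hG : ∀ u v, u ≠ v → ∃ c, G.IsNClique 3 c ∧ u ∉ c ∧ v ∉ c)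
    {s₁ s₂ : Finset V} (h₁ : G.IsNClique 3 s₁) (h₂ : G.IsNClique 3 s₂) (h₁₂ : Disjoint s₁ s₂) :
    9 ≤ #G.edgeFinset := by
  by_contra! hE
  have hI : ∀ t, Disjoint (s₁ ∩ s₂) t := fun t => by
    simp [disjoint_iff_inter_eq_empty.1 h₁₂]
  obtain ⟨a, ha⟩ := card_pos.1 (by rw [h₁.card_eq]; norm_num)
  obtain ⟨d, hd⟩ := card_pos.1 (by rw [h₂.card_eq]; norm_num)
  have hne : ∀ {x y}, x ∈ s₁ → y ∈ s₂ → x ≠ y :=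
    fun hx hy h => Finset.disjoint_left.1 h₁₂ hx (h ▸ hy)
  obtain ⟨t, ht, hat, hdt⟩ := hG a d (hne ha hd)
  have huniq : ∀ {t'}, G.IsNClique 3 t' → t' ≠ s₁ → t' ≠ s₂ → t = t' := fun ht' ht'₁ ht'₂ =>
    eq_of_isNClique_of_card_edgeFinset_le_eight (by omega) h₁ h₂
      (by simp [disjoint_iff_inter_eq_empty.1 h₁₂]) ht (fun h => hat (h ▸ ha))
      (fun h => hdt (h ▸ hd)) (hI t) ht' ht'₁ ht'₂ (hI _)
  by_cases hts₁ : Disjoint t s₁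
  · by_cases hts₂ : Disjoint t s₂
    · have := nine_le_card_edgeFinset_of_pairwise_disjoint h₁ h₂ ht h₁₂ hts₁.symm hts₂.symm
      omega
    obtain ⟨x, hxt, hx₂⟩ := not_disjoint_iff.1 hts₂
    obtain ⟨t', ht', hxt', hat'⟩ := hG x a (hne ha hx₂).symm
    exact hxt' (huniq ht' (fun h => hat' (h ▸ ha)) (fun h => hxt' (h ▸ hx₂)) ▸ hxt)
  obtain ⟨x, hxt, hx₁⟩ := not_disjoint_iff.1 hts₁
  obtain ⟨t', ht', hxt', hdt'⟩ := hG x d (hne hx₁ hd)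
  exact hxt' (huniq ht' (fun h => hxt' (h ▸ hx₁)) (fun h => hdt' (h ▸ hd)) ▸ hxt)

theorem nine_le_card_edgeFinset [Nontrivial V]
    (hG : ∀ u v, u ≠ v → ∃ c, G.IsNClique 3 c ∧ u ∉ c ∧ v ∉ c) : 9 ≤ #G.edgeFinset := by
  obtain ⟨s₁, s₂, h₁, h₂, h₁₂⟩ := exists_isNClique_three_card_inter_le_one hG
  obtain h₀ | h₁' : #(s₁ ∩ s₂) = 0 ∨ #(s₁ ∩ s₂) = 1 := by omega
  · exact nine_le_card_edgeFinset_of_disjoint hG h₁ h₂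
      (disjoint_iff_inter_eq_empty.2 (card_eq_zero.1 h₀))
  · obtain ⟨c, hc⟩ := card_eq_one.1 h₁'
    exact nine_le_card_edgeFinset_of_inter_eq_singleton hG h₁ h₂ hc

end SimpleGraph

lemma cliqueInEveryK_iff {V : Type*} [Fintype V] [DecidableEq V] {G : SimpleGraph V} {k t : ℕ}
    (hk : k + 2 = Fintype.card V) :
    CliqueInEveryK G k t ↔ ∀ u v, u ≠ v → ∃ c, G.IsNClique t c ∧ u ∉ c ∧ v ∉ c := by
  constructor
  · intro hG u v huv
    obtain ⟨c, hcs, hc⟩ := hG {u, v}ᶜ (by rw [card_compl, card_pair huv]; omega)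
    exact ⟨c, hc, fun hu => by simpa using hcs hu, fun hv => by simpa using hcs hv⟩
  · intro hG s hs
    obtain ⟨u, v, huv, hsc⟩ := card_eq_two.1 (by rw [card_compl]; omega : #sᶜ = 2)
    obtain ⟨c, hc, hu, hv⟩ := hG u v huv
    refine ⟨c, fun x hx => not_not.1 fun hxs => ?_, hc⟩
    have hx' : x ∈ ({u, v} : Finset V) := hsc ▸ mem_compl.2 hxs
    rw [mem_insert, mem_singleton] at hx'
    rcases hx' with rfl | rfl <;> contradiction

lemma edgeCount_eq_card_edgeFinset {V : Type*} (G : SimpleGraph V) [Fintype G.edgeSet] :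
    edgeCount G = #G.edgeFinset := by
  rw [edgeCount, Nat.card_eq_fintype_card, edgeFinset_card]

instance : DecidableRel threeK1plusK3plusK4.Adj := inferInstanceAs (DecidableRel (fromRel _).Adj)
instance : DecidableRel K1plus3K3.Adj := inferInstanceAs (DecidableRel (fromRel _).Adj)
instance : DecidableRel fiveK1plusK5.Adj := inferInstanceAs (DecidableRel (fromRel _).Adj)

lemma cliqueInEveryK_threeK1plusK3plusK4 : CliqueInEveryK threeK1plusK3plusK4 8 3 := by
  have h : ∀ u v : Fin 10,
      ∃ c ∈ insert {3, 4, 5} (({6, 7, 8, 9} : Finset (Fin 10)).powersetCard 3),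
      threeK1plusK3plusK4.IsNClique 3 c ∧ u ∉ c ∧ v ∉ c := by decide
  exact (cliqueInEveryK_iff rfl).2 fun u v _ => (h u v).imp fun _ => And.right

lemma cliqueInEveryK_K1plus3K3 : CliqueInEveryK K1plus3K3 8 3 := by
  have h : ∀ u v : Fin 10, ∃ c ∈ [{1, 2, 3}, {4, 5, 6}, {7, 8, 9}],
      K1plus3K3.IsNClique 3 c ∧ u ∉ c ∧ v ∉ c := by decide
  exact (cliqueInEveryK_iff rfl).2 fun u v _ => (h u v).imp fun _ => And.right

lemma cliqueInEveryK_fiveK1plusK5 : CliqueInEveryK fiveK1plusK5 8 3 := by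
  have h : ∀ u v : Fin 10, ∃ c ∈ ({5, 6, 7, 8, 9} : Finset (Fin 10)).powersetCard 3,
      fiveK1plusK5.IsNClique 3 c ∧ u ∉ c ∧ v ∉ c := by decide
  exact (cliqueInEveryK_iff rfl).2 fun u v _ => (h u v).imp fun _ => And.right

set_option maxRecDepth 100000 in
lemma cliqueFree_four_K1plus3K3 : K1plus3K3.CliqueFree 4 := by
  unfold CliqueFree; decide

lemma not_cliqueFree_four_threeK1plusK3plusK4 : ¬threeK1plusK3plusK4.CliqueFree 4 :=
  fun h => h {6, 7, 8, 9} (by decide)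

/-- `3K₁ + K₃ + K₄` and `K₁ + 3K₃` are `(10,8,3)`-graphs with 9 edges, `5K₁ + K₅` is a
`(10,8,3)`-graph with 10 edges, every `(10,8,3)`-graph has at least 9 edges, and the
first two are non-isomorphic: there exist two non-isomorphic minimum `(10,8,3)`-graphs
that are disjoint unions of cliques. -/
theorem stmt_19 :
    CliqueInEveryK threeK1plusK3plusK4 8 3 ∧ CliqueInEveryK K1plus3K3 8 3 ∧
    CliqueInEveryK fiveK1plusK5 8 3 ∧
    edgeCount threeK1plusK3plusK4 = 9 ∧ edgeCount K1plus3K3 = 9 ∧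
    edgeCount fiveK1plusK5 = 10 ∧
    (∀ G : SimpleGraph (Fin 10), CliqueInEveryK G 8 3 → 9 ≤ edgeCount G) ∧
    IsEmpty (threeK1plusK3plusK4 ≃g K1plus3K3) := by
  refine ⟨cliqueInEveryK_threeK1plusK3plusK4, cliqueInEveryK_K1plus3K3,
    cliqueInEveryK_fiveK1plusK5, ?_, ?_, ?_, fun G hG => ?_, ⟨fun φ => ?_⟩⟩
  · rw [edgeCount_eq_card_edgeFinset]; decide
  · rw [edgeCount_eq_card_edgeFinset]; decide
  · rw [edgeCount_eq_card_edgeFinset]; decide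
  · classical
    rw [edgeCount_eq_card_edgeFinset]
    exact nine_le_card_edgeFinset ((cliqueInEveryK_iff rfl).1 hG)
  · exact not_cliqueFree_four_threeK1plusK3plusK4 (cliqueFree_four_K1plus3K3.comap φ.isContained)
end
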